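/- arXiv:2507.04971 — 2 statements merged into one kernel-verified Lean document; each statement's English description precedes it below -/
import Mathlib

section
/- With the doubling algorithm iterates satisfying x* - u_k = F_k x* μ*^{2^k} and ‖x* v_kᵀ‖₁ ≤ 2^k/(1+2^k), c_k = (1 - v_kᵀx*)μ*^{2^k}, and β_k = ‖c_kF_k‖₁ < 1/(2^k+1)², one has ‖x* - u_k‖₁ ≤ β_k(1+2^k)‖x*‖₁ < 1/2^k; hence u_k converges to x* at least linearly with rate 1/2. -/
/-!
Since `vᵀx* ≤ ‖x* vᵀ‖₁ ≤ 2^k/(1+2^k)`, the factor `1 - vᵀx*` is at least `1/(1+2^k)`; in particular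
`c_k ≥ 0`, and `‖x* - u_k‖₁ = μ*^{2^k} ‖F_k x*‖₁ ≤ μ*^{2^k} ‖F_k‖₁ ‖x*‖₁` is at most
`(1+2^k) ‖c_k F_k‖₁ ‖x*‖₁`. With `‖x*‖₁ < 1` and `β_k < 1/(2^k+1)²` this is below
`1/(2^k+1) < 1/2^k`.
-/

open Matrix Filter Topology

/-- ℓ¹ norm of a vector in ℝⁿ. -/
noncomputable def l1 {n : ℕ} (x : Fin n → ℝ) : ℝ := ∑ i, |x i|

/-- Induced operator 1-norm of a real matrix (maximum column sum). -/
noncomputable def op1 {n : ℕ} (A : Matrix (Fin n) (Fin n) ℝ) : ℝ := ⨆ j, ∑ i, |A i j|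

section Norms

variable {n : ℕ}

lemma l1_nonneg (x : Fin n → ℝ) : 0 ≤ l1 x :=
  Finset.sum_nonneg fun _ _ => abs_nonneg _

lemma abs_apply_le_l1 (x : Fin n → ℝ) (i : Fin n) : |x i| ≤ l1 x :=
  Finset.single_le_sum (f := fun j => |x j|) (fun _ _ => abs_nonneg _) (Finset.mem_univ i)

lemma l1_smul (a : ℝ) (x : Fin n → ℝ) : l1 (a • x) = |a| * l1 x := by
  simp only [l1, Finset.mul_sum, Pi.smul_apply, smul_eq_mul, abs_mul]

lemma op1_nonneg (A : Matrix (Fin n) (Fin n) ℝ) : 0 ≤ op1 A :=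
  Real.iSup_nonneg fun _ => Finset.sum_nonneg fun _ _ => abs_nonneg _

lemma sum_abs_le_op1 (A : Matrix (Fin n) (Fin n) ℝ) (j : Fin n) : ∑ i, |A i j| ≤ op1 A :=
  le_ciSup (f := fun j' => ∑ i, |A i j'|) (Set.finite_range _).bddAbove j

lemma op1_smul (a : ℝ) (A : Matrix (Fin n) (Fin n) ℝ) : op1 (a • A) = |a| * op1 A := by
  simp only [op1, Real.mul_iSup_of_nonneg (abs_nonneg a), Finset.mul_sum, Matrix.smul_apply,
    smul_eq_mul, abs_mul]

lemma l1_mulVec_le (A : Matrix (Fin n) (Fin n) ℝ) (x : Fin n → ℝ) :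
    l1 (A *ᵥ x) ≤ op1 A * l1 x :=
  calc l1 (A *ᵥ x) ≤ ∑ i, ∑ j, |A i j| * |x j| :=
        Finset.sum_le_sum fun i _ =>
          (Finset.abs_sum_le_sum_abs (fun j => A i j * x j) Finset.univ).trans_eq
            (by simp only [abs_mul])
    _ = ∑ j, (∑ i, |A i j|) * |x j| := by
        rw [Finset.sum_comm]; simp only [Finset.sum_mul]
    _ ≤ ∑ j, op1 A * |x j| :=
        Finset.sum_le_sum fun j _ => by gcongr; exact sum_abs_le_op1 A j
    _ = op1 A * l1 x := (Finset.mul_sum _ _ _).symm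

lemma l1_mul_abs_le_op1_vecMulVec (x v : Fin n → ℝ) (j : Fin n) :
    l1 x * |v j| ≤ op1 (vecMulVec x v) :=
  calc l1 x * |v j| = ∑ i, |vecMulVec x v i j| := by
        simp only [l1, Finset.sum_mul, vecMulVec_apply, abs_mul]
    _ ≤ op1 (vecMulVec x v) := sum_abs_le_op1 _ j

lemma abs_dotProduct_le_op1_vecMulVec (x v : Fin n → ℝ) :
    |v ⬝ᵥ x| ≤ op1 (vecMulVec x v) := by
  have hsum : |v ⬝ᵥ x| ≤ ∑ j, |v j| * |x j| :=
    (Finset.abs_sum_le_sum_abs _ _).trans_eq (by simp only [abs_mul])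
  rcases (l1_nonneg x).eq_or_lt with hx | hx
  · have hx0 : ∀ j, |x j| = 0 := fun j => le_antisymm (hx ▸ abs_apply_le_l1 x j) (abs_nonneg _)
    calc |v ⬝ᵥ x| ≤ ∑ j, |v j| * |x j| := hsum
      _ = 0 := by simp only [hx0, mul_zero, Finset.sum_const_zero]
      _ ≤ op1 (vecMulVec x v) := op1_nonneg _
  · calc |v ⬝ᵥ x| ≤ ∑ j, op1 (vecMulVec x v) / l1 x * |x j| :=
          hsum.trans <| Finset.sum_le_sum fun j _ => by
            gcongr
            rw [le_div_iff₀ hx, mul_comm]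
            exact l1_mul_abs_le_op1_vecMulVec x v j
      _ = op1 (vecMulVec x v) := by
          rw [← Finset.mul_sum]
          exact div_mul_cancel₀ _ hx.ne'

lemma tendsto_of_tendsto_l1_sub {α : Type*} {l : Filter α} {u : α → Fin n → ℝ} {x : Fin n → ℝ}
    (h : Tendsto (fun k => l1 (x - u k)) l (𝓝 0)) : Tendsto u l (𝓝 x) := by
  refine tendsto_pi_nhds.mpr fun i => ?_
  have hi : Tendsto (fun k => x i - u k i) l (𝓝 0) :=
    squeeze_zero_norm (fun k => abs_apply_le_l1 (x - u k) i) h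
  simpa using (tendsto_const_nhds (x := x i)).sub hi

end Norms

lemma l1_sub_le_of_eq_smul_mulVec {n : ℕ} {x y v : Fin n → ℝ} {F : Matrix (Fin n) (Fin n) ℝ}
    {a t : ℝ} (ha : 0 ≤ a) (ht : 0 ≤ t) (hid : x - y = a • F *ᵥ x)
    (hxv : op1 (vecMulVec x v) ≤ t / (1 + t)) :
    l1 (x - y) ≤ op1 (((1 - v ⬝ᵥ x) * a) • F) * (1 + t) * l1 x := by
  have hdot : v ⬝ᵥ x ≤ t / (1 + t) :=
    (le_abs_self _).trans <| (abs_dotProduct_le_op1_vecMulVec x v).trans hxv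
  have hfactor : 1 ≤ (1 - v ⬝ᵥ x) * (1 + t) := by
    rw [le_div_iff₀ (by linarith)] at hdot
    linarith
  have hc : 0 ≤ (1 - v ⬝ᵥ x) * a := mul_nonneg (by nlinarith) ha
  have hbound : 0 ≤ a * (op1 F * l1 x) := mul_nonneg ha (mul_nonneg (op1_nonneg F) (l1_nonneg x))
  rw [hid, l1_smul, abs_of_nonneg ha, op1_smul, abs_of_nonneg hc]
  calc a * l1 (F *ᵥ x) ≤ a * (op1 F * l1 x) := by gcongr; exact l1_mulVec_le F x
    _ ≤ (1 - v ⬝ᵥ x) * (1 + t) * (a * (op1 F * l1 x)) := le_mul_of_one_le_left hbound hfactor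
    _ = (1 - v ⬝ᵥ x) * a * op1 F * (1 + t) * l1 x := by ring

lemma mul_one_add_mul_lt_inv {β t m : ℝ} (ht : 0 < t) (hβ0 : 0 ≤ β) (hβ : β < 1 / (t + 1) ^ 2)
    (hm : m < 1) : β * (1 + t) * m < 1 / t := by
  have hβ' : β * (1 + t) < 1 / (t + 1) := by
    have := mul_lt_mul_of_pos_right hβ (by linarith : 0 < 1 + t)
    rwa [show 1 / (t + 1) ^ 2 * (1 + t) = 1 / (t + 1) by field_simp; ring] at this
  calc β * (1 + t) * m ≤ β * (1 + t) := mul_le_of_le_one_right (by positivity) hm.le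
    _ < 1 / (t + 1) := hβ'
    _ < 1 / t := one_div_lt_one_div_of_lt ht (by linarith)

theorem stmt_18_general {n : ℕ} (xs : Fin n → ℝ)
    (μs : ℝ) (hμs : μs = l1 xs) (hμs1 : μs < 1)
    (u v : ℕ → Fin n → ℝ) (F : ℕ → Matrix (Fin n) (Fin n) ℝ) (c : ℕ → ℝ)
    (hid : ∀ k, xs - u k = μs ^ (2 ^ k) • (F k).mulVec xs)
    (hc : ∀ k, c k = (1 - dotProduct (v k) xs) * μs ^ (2 ^ k))
    (hxv : ∀ k, op1 (vecMulVec xs (v k)) ≤ (2 : ℝ) ^ k / (1 + 2 ^ k))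
    (hβ : ∀ k, op1 (c k • F k) < 1 / ((2 : ℝ) ^ k + 1) ^ 2) :
    (∀ k, l1 (xs - u k) ≤ op1 (c k • F k) * (1 + 2 ^ k) * l1 xs ∧
      l1 (xs - u k) < 1 / 2 ^ k) ∧
    Tendsto u atTop (𝓝 xs) := by
  have hμ0 : 0 ≤ μs := hμs ▸ l1_nonneg xs
  have bound k : l1 (xs - u k) ≤ op1 (c k • F k) * (1 + 2 ^ k) * l1 xs := by
    rw [hc k]
    exact l1_sub_le_of_eq_smul_mulVec (by positivity) (by positivity) (hid k) (hxv k)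
  have rate k : l1 (xs - u k) < 1 / 2 ^ k :=
    (bound k).trans_lt <|
      mul_one_add_mul_lt_inv (by positivity) (op1_nonneg _) (hβ k) (hμs ▸ hμs1)
  refine ⟨fun k => ⟨bound k, rate k⟩, tendsto_of_tendsto_l1_sub ?_⟩
  refine squeeze_zero (fun k => l1_nonneg _) (fun k => (rate k).le) ?_
  simpa only [one_div, inv_pow] using
    tendsto_pow_atTop_nhds_zero_of_lt_one (by norm_num : (0 : ℝ) ≤ 2⁻¹) (by norm_num)

/-- Theorem 21 (convergence of SDA): under the identities
`x* - u_k = μ*^{2^k} F_k x*`, `c_k = (1 - v_kᵀx*) μ*^{2^k}`,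
`‖x* v_kᵀ‖₁ ≤ 2^k/(1+2^k)` and `β_k = ‖c_k F_k‖₁ < 1/(2^k+1)²`, one has
`‖x* - u_k‖₁ ≤ β_k (1+2^k) ‖x*‖₁ < 1/2^k`; hence `u_k → x*` at least linearly
with rate `1/2`. -/
theorem stmt_18 {n : ℕ} (xs : Fin n → ℝ) (hxs : ∀ i, 0 ≤ xs i)
    (μs : ℝ) (hμs : μs = l1 xs) (hμs1 : μs < 1)
    (u v : ℕ → Fin n → ℝ) (F : ℕ → Matrix (Fin n) (Fin n) ℝ) (c : ℕ → ℝ)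
    (hid : ∀ k, xs - u k = μs ^ (2 ^ k) • (F k).mulVec xs)
    (hc : ∀ k, c k = (1 - dotProduct (v k) xs) * μs ^ (2 ^ k))
    (hxv : ∀ k, op1 (vecMulVec xs (v k)) ≤ (2 : ℝ) ^ k / (1 + 2 ^ k))
    (hβ : ∀ k, op1 (c k • F k) < 1 / ((2 : ℝ) ^ k + 1) ^ 2) :
    (∀ k, l1 (xs - u k) ≤ op1 (c k • F k) * (1 + 2 ^ k) * l1 xs ∧
      l1 (xs - u k) < 1 / 2 ^ k) ∧
    Tendsto u atTop (𝓝 xs) :=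
  stmt_18_general xs μs hμs hμs1 u v F c hid hc hxv hβ
end

section
/- Let W be an invertible M-matrix with principal square root V, and let v ∈ ℝⁿ be nonnegative with V1 = ν1 where ν = √‖v‖₁ (and 1 the all-ones vector). Then the function f(μ) = ‖((ν-μ)I + Vᵀ)⁻¹v‖₁ - μ on [0, ν] equals ν²/(2ν - μ) - μ, is nonnegative on [0,ν], and has μ = ν as its unique root in [0,ν]. -/
open Matrix Set

/-!
Since `V1 = ν1`, the all-ones vector is a left eigenvector of `A = (ν - μ)I + Vᵀ` with eigenvalue
`2ν - μ`, hence of `A⁻¹` with eigenvalue `(2ν - μ)⁻¹`. As `A⁻¹ ≥ 0` and `v ≥ 0`, the ℓ¹ norm of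
`A⁻¹v` is the sum of its entries, `1ᵀA⁻¹v = (2ν - μ)⁻¹ 1ᵀv = ν² / (2ν - μ)`. Finally
`ν² / (2ν - μ) - μ = (ν - μ)² / (2ν - μ)`, which is nonnegative on `[0, ν]` and vanishes only at `ν`.
-/

namespace Matrix

variable {ι K : Type*} [Fintype ι] [Field K]

theorem vecMul_nonsing_inv_of_vecMul_eq_smul [DecidableEq ι] {A : Matrix ι ι K} (hA : IsUnit A)
    {u : ι → K} {c : K} (h : u ᵥ* A = c • u) : u ᵥ* A⁻¹ = c⁻¹ • u := by
  have hu : u = c • (u ᵥ* A⁻¹) := by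
    rw [← smul_vecMul, ← h, vecMul_vecMul, mul_nonsing_inv A ((isUnit_iff_isUnit_det A).mp hA),
      vecMul_one]
  rcases eq_or_ne c 0 with rfl | hc
  · rw [zero_smul] at hu
    rw [hu, zero_vecMul, smul_zero]
  · exact (eq_inv_smul_iff₀ hc).mpr hu.symm

theorem one_vecMul_smul_one_add_transpose [DecidableEq ι] {V : Matrix ι ι K} {ν : K}
    (hV : V *ᵥ 1 = ν • 1) (a : K) : (1 : ι → K) ᵥ* (a • 1 + Vᵀ) = (a + ν) • 1 := by
  rw [vecMul_add, vecMul_transpose, hV, vecMul_smul, vecMul_one, add_smul]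

theorem sum_mulVec_of_one_vecMul_eq_smul {A : Matrix ι ι K} {c : K}
    (h : (1 : ι → K) ᵥ* A = c • 1) (v : ι → K) : ∑ i, (A *ᵥ v) i = c * ∑ i, v i := by
  rw [← one_dotProduct, dotProduct_mulVec, h, smul_dotProduct, one_dotProduct, smul_eq_mul]

theorem mulVec_nonneg_of_nonneg {A : Matrix ι ι ℝ} (hA : ∀ i j, 0 ≤ A i j) {v : ι → ℝ}
    (hv : ∀ i, 0 ≤ v i) (i : ι) : 0 ≤ (A *ᵥ v) i :=
  Finset.sum_nonneg fun j _ => mul_nonneg (hA i j) (hv j)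

end Matrix

theorem l1_eq_sum_of_nonneg {n : ℕ} {x : Fin n → ℝ} (hx : ∀ i, 0 ≤ x i) : l1 x = ∑ i, x i :=
  Finset.sum_congr rfl fun i _ => abs_of_nonneg (hx i)

section RealFunction

variable {μ ν : ℝ}

theorem sq_div_two_mul_sub_sub_eq (hμ : 0 ≤ μ) (hμν : μ ≤ ν) :
    ν ^ 2 / (2 * ν - μ) - μ = (ν - μ) ^ 2 / (2 * ν - μ) := by
  rcases eq_or_ne (2 * ν - μ) 0 with h | h
  · have hμ0 : μ = 0 := by linarith
    have hν0 : ν = 0 := by linarith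
    simp [hμ0, hν0]
  · rw [eq_div_iff h, sub_mul, div_mul_cancel₀ _ h]
    ring

theorem sq_div_two_mul_sub_sub_nonneg (hμ : 0 ≤ μ) (hμν : μ ≤ ν) :
    0 ≤ ν ^ 2 / (2 * ν - μ) - μ := by
  rw [sq_div_two_mul_sub_sub_eq hμ hμν]
  exact div_nonneg (sq_nonneg _) (by linarith)

theorem sq_div_two_mul_sub_sub_eq_zero_iff (hμ : 0 ≤ μ) (hμν : μ ≤ ν) :
    ν ^ 2 / (2 * ν - μ) - μ = 0 ↔ μ = ν := by
  rw [sq_div_two_mul_sub_sub_eq hμ hμν, div_eq_zero_iff, sq_eq_zero_iff, sub_eq_zero]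
  constructor
  · rintro (h | h) <;> linarith
  · exact fun h => Or.inl h.symm

end RealFunction

theorem stmt_19_general {n : ℕ} (V : Matrix (Fin n) (Fin n) ℝ)
    (v : Fin n → ℝ) (hv : ∀ i, 0 ≤ v i)
    (ν : ℝ) (hν : ν = Real.sqrt (l1 v))
    (hV1 : V.mulVec (fun _ => 1) = ν • (fun _ => (1 : ℝ)))
    (hinv : ∀ μ ∈ Icc (0 : ℝ) ν, IsUnit ((ν - μ) • (1 : Matrix (Fin n) (Fin n) ℝ) + Vᵀ))
    (hinvpos : ∀ μ ∈ Icc (0 : ℝ) ν, ∀ i j,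
      0 ≤ (((ν - μ) • (1 : Matrix (Fin n) (Fin n) ℝ) + Vᵀ)⁻¹) i j) :
    ∀ μ ∈ Icc (0 : ℝ) ν,
      (l1 ((((ν - μ) • (1 : Matrix (Fin n) (Fin n) ℝ) + Vᵀ)⁻¹).mulVec v) - μ =
        ν ^ 2 / (2 * ν - μ) - μ) ∧
      (0 ≤ l1 ((((ν - μ) • (1 : Matrix (Fin n) (Fin n) ℝ) + Vᵀ)⁻¹).mulVec v) - μ) ∧
      (l1 ((((ν - μ) • (1 : Matrix (Fin n) (Fin n) ℝ) + Vᵀ)⁻¹).mulVec v) - μ = 0 ↔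
        μ = ν) := by
  intro μ hμ
  have hsum_v : ∑ i, v i = ν ^ 2 := by
    have hl1_nonneg : 0 ≤ l1 v := Finset.sum_nonneg fun i _ => abs_nonneg (v i)
    rw [hν, Real.sq_sqrt hl1_nonneg, l1_eq_sum_of_nonneg hv]
  have hone_inv : (1 : Fin n → ℝ) ᵥ* ((ν - μ) • 1 + Vᵀ)⁻¹ = (2 * ν - μ)⁻¹ • 1 := by
    refine vecMul_nonsing_inv_of_vecMul_eq_smul (hinv μ hμ) ?_
    rw [one_vecMul_smul_one_add_transpose hV1]
    congr 1
    ring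
  have hl1 :
      l1 (((ν - μ) • (1 : Matrix (Fin n) (Fin n) ℝ) + Vᵀ)⁻¹ *ᵥ v) = ν ^ 2 / (2 * ν - μ) := by
    rw [l1_eq_sum_of_nonneg (mulVec_nonneg_of_nonneg (hinvpos μ hμ) hv),
      sum_mulVec_of_one_vecMul_eq_smul hone_inv, hsum_v, inv_mul_eq_div]
  rw [hl1]
  exact ⟨rfl, sq_div_two_mul_sub_sub_nonneg hμ.1 hμ.2,
    sq_div_two_mul_sub_sub_eq_zero_iff hμ.1 hμ.2⟩

/-- Lemma (uniqueness for the Laplacian case): with `W` an invertible `M`-matrix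
with principal square root `V` satisfying `V1 = ν1`, `ν = √‖v‖₁`, `v ≥ 0`, the
function `f(μ) = ‖((ν-μ)I + Vᵀ)⁻¹v‖₁ - μ` on `[0,ν]` equals `ν²/(2ν-μ) - μ`, is
nonnegative there, and has `μ = ν` as its unique root in `[0,ν]`. -/
theorem stmt_19 {n : ℕ} (W V : Matrix (Fin n) (Fin n) ℝ) (hW : IsUnit W)
    (hVsq : V * V = W)
    (v : Fin n → ℝ) (hv : ∀ i, 0 ≤ v i)
    (ν : ℝ) (hν : ν = Real.sqrt (l1 v))
    (hV1 : V.mulVec (fun _ => 1) = ν • (fun _ => (1 : ℝ)))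
    (hinv : ∀ μ ∈ Icc (0 : ℝ) ν, IsUnit ((ν - μ) • (1 : Matrix (Fin n) (Fin n) ℝ) + Vᵀ))
    (hinvpos : ∀ μ ∈ Icc (0 : ℝ) ν, ∀ i j,
      0 ≤ (((ν - μ) • (1 : Matrix (Fin n) (Fin n) ℝ) + Vᵀ)⁻¹) i j) :
    ∀ μ ∈ Icc (0 : ℝ) ν,
      (l1 ((((ν - μ) • (1 : Matrix (Fin n) (Fin n) ℝ) + Vᵀ)⁻¹).mulVec v) - μ =
        ν ^ 2 / (2 * ν - μ) - μ) ∧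
      (0 ≤ l1 ((((ν - μ) • (1 : Matrix (Fin n) (Fin n) ℝ) + Vᵀ)⁻¹).mulVec v) - μ) ∧
      (l1 ((((ν - μ) • (1 : Matrix (Fin n) (Fin n) ℝ) + Vᵀ)⁻¹).mulVec v) - μ = 0 ↔
        μ = ν) :=
  stmt_19_general V v hv ν hν hV1 hinv hinvpos
end
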